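/- arXiv:1405.1855 — 5 statements merged into one kernel-verified Lean document; each statement's English description precedes it below -/
import Mathlib

section
/- Let α ∈ (0,1) and let S be a positive α-stable random variable, i.e. a nonnegative random variable with E[e^{-λS}] = e^{-λ^α} for all λ ≥ 0. Then for every natural number k ≥ 1, the negative moment E[S^{-αk}] is finite and equals k! / Γ(1 + αk). -/
open MeasureTheory Real
open Filter Set Topology

/-! For `β, s > 0`, `Γ(β) s^(-β) = ∫₀^∞ t^(β-1) e^(-ts) dt`. Put `s = S`, take expectations and
exchange the integrals (Tonelli); the Laplace transform of `S` appears inside, and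
`Γ(β) E[S^(-β)] = ∫₀^∞ t^(β-1) e^(-t^α) dt = Γ(β/α) / α`,
that is `E[S^(-β)] = Γ(1 + β/α) / Γ(1 + β)`, which is `k! / Γ(1 + αk)` at `β = αk`.
Putting `s = S` needs `S > 0` almost surely: `P(S = 0) ≤ E[e^(-lS)] = e^(-l^α) → 0`. -/

theorem lintegral_rpow_mul_exp_neg_mul_Ioi {β s : ℝ} (hβ : 0 < β) (hs : 0 < s) :
    ∫⁻ t in Ioi 0, ENNReal.ofReal (t ^ (β - 1) * exp (-(t * s)))
      = ENNReal.ofReal (Gamma β * s ^ (-β)) := by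
  simp_rw [mul_comm _ s]
  have hint : IntegrableOn (fun t => t ^ (β - 1) * exp (-(s * t))) (Ioi 0) := by
    simpa [rpow_one, neg_mul] using
      integrableOn_rpow_mul_exp_neg_mul_rpow (p := 1) (by linarith) zero_lt_one hs
  rw [← ofReal_integral_eq_lintegral_ofReal hint, integral_rpow_mul_exp_neg_mul_Ioi hβ hs,
    one_div, inv_rpow hs.le, ← rpow_neg hs.le, mul_comm]
  filter_upwards [ae_restrict_mem measurableSet_Ioi] with t ht
  exact mul_nonneg (rpow_nonneg (le_of_lt ht) _) (exp_pos _).le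

theorem lintegral_rpow_mul_exp_neg_rpow_Ioi {α β : ℝ} (hα : 0 < α) (hβ : 0 < β) :
    ∫⁻ t in Ioi 0, ENNReal.ofReal (t ^ (β - 1) * exp (-(t ^ α)))
      = ENNReal.ofReal (Gamma (β / α) / α) := by
  have hβ1 : -1 < β - 1 := by linarith
  rw [← ofReal_integral_eq_lintegral_ofReal (integrableOn_rpow_mul_exp_neg_rpow hβ1 hα),
    integral_rpow_mul_exp_neg_rpow hα hβ1, sub_add_cancel, one_div_mul_eq_div]
  filter_upwards [ae_restrict_mem measurableSet_Ioi] with t ht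
  exact mul_nonneg (rpow_nonneg (le_of_lt ht) _) (exp_pos _).le

section LaplaceTransform

variable {Ω : Type*} [MeasurableSpace Ω] {μ : Measure Ω} {S : Ω → ℝ}

theorem lintegral_ofReal_exp_neg_mul [IsFiniteMeasure μ] (hS : Measurable S)
    (hS0 : ∀ ω, 0 ≤ S ω) {c : ℝ} (hc : 0 ≤ c) :
    ∫⁻ ω, ENNReal.ofReal (exp (-(c * S ω))) ∂μ = ENNReal.ofReal (∫ ω, exp (-(c * S ω)) ∂μ) := by
  have hbound : ∀ ω, ‖exp (-(c * S ω))‖ ≤ 1 := fun ω => by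
    rw [norm_of_nonneg (exp_pos _).le, exp_le_one_iff, neg_nonpos]
    exact mul_nonneg hc (hS0 ω)
  have hint : Integrable (fun ω => exp (-(c * S ω))) μ :=
    .of_bound (by fun_prop) 1 (.of_forall hbound)
  exact (ofReal_integral_eq_lintegral_ofReal hint (.of_forall fun ω => (exp_pos _).le)).symm

theorem measure_eq_zero_le_lintegral_exp_neg_mul (hS : Measurable S) (c : ℝ) :
    μ {ω | S ω = 0} ≤ ∫⁻ ω, ENNReal.ofReal (exp (-(c * S ω))) ∂μ := by
  rw [← lintegral_indicator_one (s := {ω | S ω = 0}) (hS (measurableSet_singleton 0))]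
  refine lintegral_mono fun ω => ?_
  by_cases h : S ω = 0 <;> simp [h]

end LaplaceTransform

/-- The Laplace transform is written as a lower Lebesgue integral, so that no integrability
side condition is needed. -/
structure IsPositiveStable {Ω : Type*} [MeasurableSpace Ω] (μ : Measure Ω) (α : ℝ)
    (S : Ω → ℝ) : Prop where
  measurable : Measurable S
  nonneg : ∀ ω, 0 ≤ S ω
  lintegral_exp_neg_mul : ∀ l : ℝ, 0 ≤ l →
    ∫⁻ ω, ENNReal.ofReal (exp (-(l * S ω))) ∂μ = ENNReal.ofReal (exp (-(l ^ α)))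

namespace IsPositiveStable

variable {Ω : Type*} [MeasurableSpace Ω] {μ : Measure Ω} {S : Ω → ℝ} {α β : ℝ}

theorem of_integral [IsFiniteMeasure μ] (hS : Measurable S) (hS0 : ∀ ω, 0 ≤ S ω)
    (hL : ∀ l : ℝ, 0 ≤ l → ∫ ω, exp (-(l * S ω)) ∂μ = exp (-(l ^ α))) :
    IsPositiveStable μ α S where
  measurable := hS
  nonneg := hS0
  lintegral_exp_neg_mul l hl := (lintegral_ofReal_exp_neg_mul hS hS0 hl).trans (by rw [hL l hl])

theorem isProbabilityMeasure (h : IsPositiveStable μ α S) (hα : 0 < α) :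
    IsProbabilityMeasure μ :=
  ⟨by simpa [zero_rpow hα.ne'] using h.lintegral_exp_neg_mul 0 le_rfl⟩

theorem ae_pos (h : IsPositiveStable μ α S) (hα : 0 < α) : ∀ᵐ ω ∂μ, 0 < S ω := by
  have hlim : Tendsto (fun l : ℝ => ENNReal.ofReal (exp (-(l ^ α)))) atTop (𝓝 0) := by
    simpa using (ENNReal.tendsto_ofReal (tendsto_exp_neg_atTop_nhds_zero.comp
      (tendsto_rpow_atTop hα)))
  have hzero : μ {ω | S ω = 0} = 0 := le_antisymm (ge_of_tendsto hlim (by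
    filter_upwards [eventually_ge_atTop (0 : ℝ)] with l hl
    exact h.lintegral_exp_neg_mul l hl ▸
      measure_eq_zero_le_lintegral_exp_neg_mul h.measurable l)) zero_le
  filter_upwards [measure_eq_zero_iff_ae_notMem.mp hzero] with ω hω
  exact (h.nonneg ω).lt_of_ne' hω

theorem lintegral_rpow_neg (h : IsPositiveStable μ α S) (hα : 0 < α) (hβ : 0 < β) :
    ∫⁻ ω, ENNReal.ofReal (S ω ^ (-β)) ∂μ = ENNReal.ofReal (Gamma (β / α) / (α * Gamma β)) := by
  have := h.isProbabilityMeasure hα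
  have hΓ : 0 < Gamma β := Gamma_pos_of_pos hβ
  have hmeas : Measurable (Function.uncurry fun ω (t : ℝ) =>
      ENNReal.ofReal (t ^ (β - 1) * exp (-(t * S ω)))) := by
    apply Measurable.ennreal_ofReal
    exact (measurable_snd.pow_const _).mul
      ((measurable_snd.mul (h.measurable.comp measurable_fst)).neg.exp)
  have key : ENNReal.ofReal (Gamma β) * ∫⁻ ω, ENNReal.ofReal (S ω ^ (-β)) ∂μ
      = ENNReal.ofReal (Gamma (β / α) / α) :=
    calc ENNReal.ofReal (Gamma β) * ∫⁻ ω, ENNReal.ofReal (S ω ^ (-β)) ∂μ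
        = ∫⁻ ω, (∫⁻ t in Ioi 0, ENNReal.ofReal (t ^ (β - 1) * exp (-(t * S ω)))) ∂μ := by
          rw [← lintegral_const_mul' _ _ ENNReal.ofReal_ne_top]
          refine lintegral_congr_ae ?_
          filter_upwards [h.ae_pos hα] with ω hω
          rw [lintegral_rpow_mul_exp_neg_mul_Ioi hβ hω, ENNReal.ofReal_mul hΓ.le]
      _ = ∫⁻ t in Ioi 0, ∫⁻ ω, ENNReal.ofReal (t ^ (β - 1) * exp (-(t * S ω))) ∂μ :=
          lintegral_lintegral_swap hmeas.aemeasurable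
      _ = ∫⁻ t in Ioi 0, ENNReal.ofReal (t ^ (β - 1) * exp (-(t ^ α))) := by
          refine setLIntegral_congr_fun measurableSet_Ioi fun t ht => ?_
          simp_rw [ENNReal.ofReal_mul (rpow_nonneg (le_of_lt ht) _)]
          rw [lintegral_const_mul' _ _ ENNReal.ofReal_ne_top,
            h.lintegral_exp_neg_mul t (le_of_lt ht)]
      _ = ENNReal.ofReal (Gamma (β / α) / α) := lintegral_rpow_mul_exp_neg_rpow_Ioi hα hβ
  rw [← div_div, ENNReal.ofReal_div_of_pos hΓ,
    ENNReal.eq_div_iff (ENNReal.ofReal_pos.mpr hΓ).ne' ENNReal.ofReal_ne_top, key]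

theorem integrable_rpow_neg_and_integral_eq (h : IsPositiveStable μ α S) (hα : 0 < α)
    (hβ : 0 ≤ β) :
    Integrable (fun ω => S ω ^ (-β)) μ ∧
      ∫ ω, S ω ^ (-β) ∂μ = Gamma (1 + β / α) / Gamma (1 + β) := by
  have := h.isProbabilityMeasure hα
  rcases hβ.eq_or_lt with rfl | hβ
  · simp
  have hlin := h.lintegral_rpow_neg hα hβ
  have hnn : 0 ≤ᵐ[μ] fun ω => S ω ^ (-β) := .of_forall fun ω => rpow_nonneg (h.nonneg ω) _
  have hsm : AEStronglyMeasurable (fun ω => S ω ^ (-β)) μ :=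
    (h.measurable.pow_const _).aestronglyMeasurable
  have hvalue : Gamma (β / α) / (α * Gamma β) = Gamma (1 + β / α) / Gamma (1 + β) := by
    rw [add_comm, Gamma_add_one (by positivity), add_comm, Gamma_add_one hβ.ne']
    field_simp
  refine ⟨⟨hsm, (hasFiniteIntegral_iff_ofReal hnn).2 (hlin ▸ ENNReal.ofReal_lt_top)⟩, ?_⟩
  rw [integral_eq_lintegral_of_nonneg_ae hnn hsm, hlin, ENNReal.toReal_ofReal (by positivity),
    hvalue]

end IsPositiveStable

theorem negative_moments_positive_stable_general
    {Ω : Type*} [MeasurableSpace Ω] (P : Measure Ω) [IsProbabilityMeasure P]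
    (α : ℝ) (hα : α ∈ Set.Ioo (0 : ℝ) 1)
    (S : Ω → ℝ) (hSmeas : Measurable S) (hSnonneg : ∀ ω, 0 ≤ S ω)
    (hLaplace : ∀ l : ℝ, 0 ≤ l →
      ∫ ω, Real.exp (-(l * S ω)) ∂P = Real.exp (-(l ^ α)))
    (k : ℕ) :
    Integrable (fun ω => S ω ^ (-(α * (k : ℝ)))) P ∧
      ∫ ω, S ω ^ (-(α * (k : ℝ))) ∂P
        = (Nat.factorial k : ℝ) / Real.Gamma (1 + α * k) := by
  have hα0 : 0 < α := hα.1
  have hS : IsPositiveStable P α S := .of_integral hSmeas hSnonneg hLaplace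
  have hmoment := hS.integrable_rpow_neg_and_integral_eq hα0 (by positivity : 0 ≤ α * k)
  rwa [mul_div_cancel_left₀ _ hα0.ne', add_comm (1 : ℝ) k, Gamma_nat_eq_factorial] at hmoment

/-- Negative moments of a positive `α`-stable random variable:
if `S ≥ 0` and `E[exp (-λ S)] = exp (-λ^α)` for all `λ ≥ 0`, with `α ∈ (0,1)`,
then for every `k ≥ 1` the negative moment `E[S^(-αk)]` is finite and equals
`k! / Γ(1 + αk)`. -/
theorem negative_moments_positive_stable
    {Ω : Type*} [MeasurableSpace Ω] (P : Measure Ω) [IsProbabilityMeasure P]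
    (α : ℝ) (hα : α ∈ Set.Ioo (0 : ℝ) 1)
    (S : Ω → ℝ) (hSmeas : Measurable S) (hSnonneg : ∀ ω, 0 ≤ S ω)
    (hLaplace : ∀ l : ℝ, 0 ≤ l →
      ∫ ω, Real.exp (-(l * S ω)) ∂P = Real.exp (-(l ^ α)))
    (k : ℕ) (hk : 1 ≤ k) :
    Integrable (fun ω => S ω ^ (-(α * (k : ℝ)))) P ∧
      ∫ ω, S ω ^ (-(α * (k : ℝ))) ∂P
        = (Nat.factorial k : ℝ) / Real.Gamma (1 + α * k) :=
  negative_moments_positive_stable_general P α hα S hSmeas hSnonneg hLaplace k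
end

section
/- Let ν ∈ (0,1], μ > 0, and let s > μ^{1/ν}. Then the Laplace transform of the positive-Linnik (Mittag--Leffler) density satisfies ∫_0^∞ e^{-st} · μ t^{ν-1} E_{ν,ν}(-μ t^ν) dt = μ / (s^ν + μ), where E_{ν,ν}(z) = ∑_{k=0}^∞ z^k / Γ(νk + ν). -/
/-!
Expanding `E_{α,β}` into its power series, the `k`-th term of `e^{-st} t^{β-1} E_{α,β}(c t^α)`
is `cᵏ t^{αk+β-1} e^{-st} / Γ(αk+β)`, whose integral over `(0, ∞)` is `(c / s^α)ᵏ / s^β`: the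
Gamma integral cancels the Gamma factor. For `|c| < s^α` the same computation with `|c|` gives
a convergent geometric series, which justifies integrating term by term, and summing the
geometric series gives `s^{α-β} / (s^α - c)`. The Linnik density is the case `α = β = ν`,
`c = -μ`, where `s > μ^{1/ν}` is exactly `μ < s^ν`.
-/
open MeasureTheory Real

/-- The two-parameter Mittag--Leffler function
`E_{α,β}(z) = ∑_{k} z^k / Γ(αk + β)`. -/
noncomputable def mittagLeffler2 (α β z : ℝ) : ℝ :=
  ∑' k : ℕ, z ^ k / Real.Gamma (α * k + β)

open Set

lemma integrableOn_rpow_sub_one_mul_exp_neg_mul {a r : ℝ} (ha : 0 < a) (hr : 0 < r) :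
    IntegrableOn (fun t : ℝ => t ^ (a - 1) * exp (-(r * t))) (Ioi 0) :=
  .of_integral_ne_zero <| by
    rw [integral_rpow_mul_exp_neg_mul_Ioi ha hr]
    exact (mul_pos (by positivity) (Gamma_pos_of_pos ha)).ne'

noncomputable def mittagLefflerLaplaceTerm (α β c s : ℝ) (k : ℕ) (t : ℝ) : ℝ :=
  c ^ k / Gamma (α * k + β) * (t ^ (α * k + β - 1) * exp (-(s * t)))

section
variable {α β c s : ℝ}

lemma exp_neg_mul_mul_rpow_mul_mittagLeffler2 {t : ℝ} (ht : 0 < t) :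
    exp (-(s * t)) * (t ^ (β - 1) * mittagLeffler2 α β (c * t ^ α))
      = ∑' k, mittagLefflerLaplaceTerm α β c s k t := by
  rw [mittagLeffler2, ← tsum_mul_left, ← tsum_mul_left]
  refine tsum_congr fun k => ?_
  have hpow : t ^ (β - 1) * (t ^ α) ^ k = t ^ (α * k + β - 1) := by
    rw [← rpow_natCast, ← rpow_mul ht.le, ← rpow_add ht]
    ring_nf
  rw [mittagLefflerLaplaceTerm, ← hpow, mul_pow]
  ring

lemma norm_mittagLefflerLaplaceTerm (hα : 0 ≤ α) (hβ : 0 < β) (k : ℕ) {t : ℝ}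
    (ht : 0 < t) :
    ‖mittagLefflerLaplaceTerm α β c s k t‖ = mittagLefflerLaplaceTerm α β |c| s k t := by
  have hΓ : 0 < Gamma (α * k + β) := Gamma_pos_of_pos (by positivity)
  have hdamped : 0 ≤ t ^ (α * k + β - 1) * exp (-(s * t)) := by positivity
  rw [mittagLefflerLaplaceTerm, mittagLefflerLaplaceTerm, norm_mul, norm_div, norm_pow,
    Real.norm_of_nonneg hΓ.le, Real.norm_of_nonneg hdamped, Real.norm_eq_abs]

lemma integrableOn_mittagLefflerLaplaceTerm (hα : 0 ≤ α) (hβ : 0 < β) (hs : 0 < s) (k : ℕ) :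
    IntegrableOn (mittagLefflerLaplaceTerm α β c s k) (Ioi 0) :=
  (integrableOn_rpow_sub_one_mul_exp_neg_mul (by positivity) hs).const_mul _

lemma integral_mittagLefflerLaplaceTerm (hα : 0 ≤ α) (hβ : 0 < β) (hs : 0 < s) (k : ℕ) :
    ∫ t in Ioi 0, mittagLefflerLaplaceTerm α β c s k t = (c / s ^ α) ^ k / s ^ β := by
  have hΓ : 0 < Gamma (α * k + β) := Gamma_pos_of_pos (by positivity)
  have hpow : (1 / s) ^ (α * k + β) = ((s ^ α) ^ k)⁻¹ / s ^ β := by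
    rw [one_div, inv_rpow hs.le, rpow_add hs, ← rpow_natCast, ← rpow_mul hs.le, mul_comm α]
    field_simp
  simp only [mittagLefflerLaplaceTerm]
  rw [integral_const_mul, integral_rpow_mul_exp_neg_mul_Ioi (by positivity) hs, hpow, div_pow]
  field_simp

theorem integral_exp_neg_mul_mul_rpow_mul_mittagLeffler2 (hα : 0 ≤ α) (hβ : 0 < β)
    (hs : 0 < s) (hc : |c| < s ^ α) :
    ∫ t in Ioi 0, exp (-(s * t)) * (t ^ (β - 1) * mittagLeffler2 α β (c * t ^ α))
      = s ^ (α - β) / (s ^ α - c) := by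
  have hsα : 0 < s ^ α := rpow_pos_of_pos hs α
  have hratio : ‖c / s ^ α‖ < 1 := by
    rwa [norm_div, Real.norm_eq_abs, Real.norm_of_nonneg hsα.le, div_lt_one hsα]
  have hsummable :
      Summable fun k => ∫ t in Ioi 0, ‖mittagLefflerLaplaceTerm α β c s k t‖ := by
    have hnorm k : ∫ t in Ioi 0, ‖mittagLefflerLaplaceTerm α β c s k t‖
        = (|c| / s ^ α) ^ k / s ^ β := by
      rw [setIntegral_congr_fun measurableSet_Ioi
          fun t ht => norm_mittagLefflerLaplaceTerm hα hβ k ht,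
        integral_mittagLefflerLaplaceTerm hα hβ hs]
    simp_rw [hnorm]
    refine (summable_geometric_of_lt_one (by positivity) ?_).div_const _
    simpa [abs_div, abs_of_pos hsα] using hratio
  rw [setIntegral_congr_fun measurableSet_Ioi
      fun t ht => exp_neg_mul_mul_rpow_mul_mittagLeffler2 ht,
    ← integral_tsum_of_summable_integral_norm
      (integrableOn_mittagLefflerLaplaceTerm hα hβ hs) hsummable]
  simp_rw [integral_mittagLefflerLaplaceTerm hα hβ hs]
  rw [tsum_div_const, tsum_geometric_of_norm_lt_one hratio, rpow_sub hs]
  have : s ^ α - c ≠ 0 := by linarith [le_abs_self c]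
  field_simp

end

/-- Laplace transform of the positive-Linnik (Mittag--Leffler) density:
for `ν ∈ (0,1]`, `μ > 0` and `s > μ^(1/ν)`,
`∫_0^∞ e^{-st} μ t^{ν-1} E_{ν,ν}(-μ t^ν) dt = μ / (s^ν + μ)`. -/
theorem laplace_transform_positive_linnik_density
    (ν : ℝ) (hν : ν ∈ Set.Ioc (0 : ℝ) 1) (μ : ℝ) (hμ : 0 < μ)
    (s : ℝ) (hs : μ ^ (1 / ν) < s) :
    ∫ t in Set.Ioi (0 : ℝ),
        Real.exp (-(s * t)) * (μ * t ^ (ν - 1) * mittagLeffler2 ν ν (-(μ * t ^ ν)))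
      = μ / (s ^ ν + μ) := by
  have hs0 : 0 < s := (rpow_pos_of_pos hμ _).trans hs
  have hμs : |-μ| < s ^ ν := by
    rw [abs_neg, abs_of_pos hμ]
    simpa [← rpow_mul hμ.le, hν.1.ne'] using rpow_lt_rpow (by positivity) hs hν.1
  have hlaplace := integral_exp_neg_mul_mul_rpow_mul_mittagLeffler2 hν.1.le hν.1 hs0 hμs
  rw [sub_self, rpow_zero, sub_neg_eq_add] at hlaplace
  simp_rw [neg_mul_eq_neg_mul μ, mul_assoc μ, mul_left_comm _ μ, integral_const_mul, hlaplace]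
  ring
end

section
/- Let ν ∈ (0,1], μ > 0, k ∈ ℕ, and let s > μ^{1/ν}. Then ∫_0^∞ e^{-st} (μ t^ν)^k E^{k+1}_{ν, νk+1}(-μ t^ν) dt = μ^k s^{ν-1} / (s^ν + μ)^{k+1}, where E^γ_{α,β}(z) = ∑_{j=0}^∞ Γ(γ + j) z^j / (Γ(γ) · j! · Γ(αj + β)) is the three-parameter generalized Mittag--Leffler function. -/
/-!
For `γ = k + 1` the Pochhammer ratio `Γ(k + 1 + j) / (Γ(k + 1) j!)` is the binomial
coefficient `C(j + k, k)`, so `(μ t^ν)^k E^{k+1}_{ν,νk+1}(-μ t^ν)` is the power series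
`∑ⱼ μ^k C(j + k, k) (-μ)^j t^{ν(j+k)} / Γ(ν(j + k) + 1)`. Integrating term by term against
`e^{-st}` cancels each Gamma factor and leaves `μ^k s^{-(νk+1)} ∑ⱼ C(j + k, k) (-μ/s^ν)^j`,
the negative binomial series, which sums to `(1 + μ/s^ν)^{-(k+1)}` because `μ < s^ν`.
The same computation with `|coefficients|` justifies the interchange.
-/

open MeasureTheory Real

/-- The three-parameter (Prabhakar) generalized Mittag--Leffler function
`E^γ_{α,β}(z) = ∑_{j} Γ(γ + j) z^j / (Γ(γ) j! Γ(αj + β))`. -/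
noncomputable def mittagLeffler3 (α β γ z : ℝ) : ℝ :=
  ∑' j : ℕ,
    Real.Gamma (γ + j) * z ^ j /
      (Real.Gamma γ * (Nat.factorial j : ℝ) * Real.Gamma (α * j + β))

open Set

namespace Real

lemma integrableOn_rpow_mul_exp_neg_mul_Ioi {a s : ℝ} (ha : 0 ≤ a) (hs : 0 < s) :
    IntegrableOn (fun t : ℝ => t ^ a * exp (-(s * t))) (Ioi 0) := by
  refine (integrableOn_rpow_mul_exp_neg_mul_rpow (s := a) (p := 1) (by linarith) one_pos
    hs).congr_fun (fun t _ => ?_) measurableSet_Ioi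
  simp only [rpow_one, neg_mul]

lemma integral_rpow_mul_exp_neg_mul_Ioi' {a s : ℝ} (ha : 0 ≤ a) (hs : 0 < s) :
    ∫ t in Ioi 0, t ^ a * exp (-(s * t)) = Gamma (a + 1) / s ^ (a + 1) := by
  have h := integral_rpow_mul_exp_neg_mul_Ioi (a := a + 1) (by linarith) hs
  rw [add_sub_cancel_right] at h
  rw [h, div_rpow zero_le_one hs.le, one_rpow]
  ring

theorem integral_tsum_mul_rpow_mul_exp_neg_mul_Ioi {c a : ℕ → ℝ} {s : ℝ} (ha : ∀ j, 0 ≤ a j)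
    (hs : 0 < s) (hc : Summable fun j => |c j| * (Gamma (a j + 1) / s ^ (a j + 1))) :
    ∫ t in Ioi 0, ∑' j, c j * (t ^ a j * exp (-(s * t)))
      = ∑' j, c j * (Gamma (a j + 1) / s ^ (a j + 1)) := by
  have hnorm (j : ℕ) :
      ∫ t in Ioi 0, ‖c j * (t ^ a j * exp (-(s * t)))‖
        = |c j| * (Gamma (a j + 1) / s ^ (a j + 1)) := by
    rw [← integral_rpow_mul_exp_neg_mul_Ioi' (ha j) hs, ← integral_const_mul]
    refine setIntegral_congr_fun measurableSet_Ioi fun t ht => ?_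
    rw [norm_mul, norm_eq_abs, norm_of_nonneg (by have := ht.out.le; positivity)]
  rw [← integral_tsum_of_summable_integral_norm
    (fun j => ((integrableOn_rpow_mul_exp_neg_mul_Ioi (ha j) hs).const_mul (c j)))
    (by simpa only [hnorm] using hc)]
  exact tsum_congr fun j => by
    rw [integral_const_mul, integral_rpow_mul_exp_neg_mul_Ioi' (ha j) hs]

end Real

lemma mittagLeffler3_natCast_add_one (α β z : ℝ) (k : ℕ) :
    mittagLeffler3 α β (k + 1) z = ∑' j : ℕ, ((j + k).choose k : ℝ) * z ^ j / Gamma (α * j + β) := by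
  refine tsum_congr fun j => ?_
  have hfac : ((k + j).factorial : ℝ) = ((j + k).choose k : ℝ) * k.factorial * j.factorial := by
    rw_mod_cast [add_comm k j, ← Nat.add_choose_mul_factorial_mul_factorial j k]
    ring
  rw [show (k : ℝ) + 1 + j = ((k + j : ℕ) : ℝ) + 1 by push_cast; ring, Gamma_nat_eq_factorial,
    Gamma_nat_eq_factorial, hfac]
  field_simp

/-- The coefficient of `t^{ν(j+k)}` in `(y t^ν)^k E^{k+1}_{ν,νk+1}(-y t^ν)`, up to the sign
`(-1)^j`. -/
noncomputable def fractionalPoissonCoeff (ν y : ℝ) (k j : ℕ) : ℝ :=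
  y ^ k * ((j + k).choose k : ℝ) * y ^ j / Gamma (ν * (j + k) + 1)

lemma rpow_pow_mul_mittagLeffler3_eq_tsum {ν : ℝ} (μ : ℝ) (k : ℕ) {t : ℝ} (ht : 0 ≤ t) :
    (μ * t ^ ν) ^ k * mittagLeffler3 ν (ν * k + 1) (k + 1) (-(μ * t ^ ν))
      = ∑' j : ℕ, (-1) ^ j * fractionalPoissonCoeff ν μ k j * t ^ (ν * (j + k)) := by
  rw [mittagLeffler3_natCast_add_one, ← tsum_mul_left]
  refine tsum_congr fun j => ?_
  rw [fractionalPoissonCoeff, show ν * (j + k : ℝ) = ν * ((j + k : ℕ) : ℝ) by push_cast; ring,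
    rpow_mul ht, rpow_natCast,
    show ν * j + (ν * k + 1) = ν * ((j + k : ℕ) : ℝ) + 1 by push_cast; ring]
  ring

lemma fractionalPoissonCoeff_nonneg {ν y : ℝ} (hν : 0 ≤ ν) (hy : 0 ≤ y) (k j : ℕ) :
    0 ≤ fractionalPoissonCoeff ν y k j := by
  unfold fractionalPoissonCoeff
  positivity

lemma fractionalPoissonCoeff_mul_gamma_div_rpow {ν s : ℝ} (hν : 0 ≤ ν) (hs : 0 < s) (y : ℝ)
    (k j : ℕ) :
    fractionalPoissonCoeff ν y k j * (Gamma (ν * (j + k) + 1) / s ^ (ν * (j + k) + 1))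
      = y ^ k / s ^ (ν * k + 1) * ((j + k).choose k * (y / s ^ ν) ^ j) := by
  have hΓ : Gamma (ν * (j + k) + 1) ≠ 0 := (Gamma_pos_of_pos (by positivity)).ne'
  rw [fractionalPoissonCoeff, show ν * (j + k) + 1 = ν * j + (ν * k + 1) by ring,
    rpow_add hs, rpow_mul hs.le, rpow_natCast, div_pow]
  field_simp

lemma pow_div_rpow_mul_one_div_one_sub_neg_pow_succ {ν s : ℝ} (hs : 0 < s) (μ : ℝ) (k : ℕ) :
    μ ^ k / s ^ (ν * k + 1) * (1 / (1 - -(μ / s ^ ν)) ^ (k + 1))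
      = μ ^ k * s ^ (ν - 1) / (s ^ ν + μ) ^ (k + 1) := by
  have hsν : 0 < s ^ ν := rpow_pos_of_pos hs ν
  have hsum : 1 - -(μ / s ^ ν) = (s ^ ν + μ) / s ^ ν := by field_simp; ring
  rw [hsum, rpow_add hs, rpow_mul hs.le, rpow_natCast, rpow_one, rpow_sub_one hs.ne', div_pow]
  field_simp
  ring

/-- Laplace transform of the state probabilities of the fractional Poisson
process: for `ν ∈ (0,1]`, `μ > 0`, `k ∈ ℕ`, and `s > μ^(1/ν)`,
`∫_0^∞ e^{-st} (μ t^ν)^k E^{k+1}_{ν,νk+1}(-μ t^ν) dt = μ^k s^{ν-1} / (s^ν + μ)^{k+1}`. -/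
theorem laplace_transform_fractional_poisson_state_prob
    (ν : ℝ) (hν : ν ∈ Set.Ioc (0 : ℝ) 1) (μ : ℝ) (hμ : 0 < μ) (k : ℕ)
    (s : ℝ) (hs : μ ^ (1 / ν) < s) :
    ∫ t in Set.Ioi (0 : ℝ),
        Real.exp (-(s * t)) * ((μ * t ^ ν) ^ k *
          mittagLeffler3 ν (ν * k + 1) (k + 1) (-(μ * t ^ ν)))
      = μ ^ k * s ^ (ν - 1) / (s ^ ν + μ) ^ (k + 1) := by
  obtain ⟨hν0, -⟩ := hν
  have hs0 : 0 < s := (rpow_pos_of_pos hμ _).trans hs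
  have hnorm : ‖μ / s ^ ν‖ < 1 := by
    rw [norm_of_nonneg (by positivity), div_lt_one (rpow_pos_of_pos hs0 ν)]
    simpa [← rpow_mul hμ.le, hν0.ne'] using rpow_lt_rpow (by positivity) hs hν0
  have hexpand : ∀ t ∈ Ioi (0 : ℝ),
      exp (-(s * t)) * ((μ * t ^ ν) ^ k * mittagLeffler3 ν (ν * k + 1) (k + 1) (-(μ * t ^ ν)))
        = ∑' j : ℕ, (-1) ^ j * fractionalPoissonCoeff ν μ k j
            * (t ^ (ν * (j + k)) * exp (-(s * t))) := fun t ht => by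
    rw [rpow_pow_mul_mittagLeffler3_eq_tsum μ k ht.out.le, ← tsum_mul_left]
    exact tsum_congr fun j => by ring
  have hterm (j : ℕ) : (-1) ^ j * fractionalPoissonCoeff ν μ k j
      * (Gamma (ν * (j + k) + 1) / s ^ (ν * (j + k) + 1))
        = μ ^ k / s ^ (ν * k + 1) * ((j + k).choose k * (-(μ / s ^ ν)) ^ j) := by
    rw [mul_assoc, fractionalPoissonCoeff_mul_gamma_div_rpow hν0.le hs0, neg_pow (μ / s ^ ν)]
    ring
  rw [setIntegral_congr_fun measurableSet_Ioi hexpand,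
    integral_tsum_mul_rpow_mul_exp_neg_mul_Ioi (fun j => by positivity) hs0, tsum_congr hterm,
    tsum_mul_left, tsum_choose_mul_geometric_of_norm_lt_one k (by rwa [norm_neg]),
    pow_div_rpow_mul_one_div_one_sub_neg_pow_succ hs0 μ]
  refine ((summable_choose_mul_geometric_of_norm_lt_one k hnorm).mul_left
    (μ ^ k / s ^ (ν * k + 1))).congr fun j => ?_
  rw [abs_mul, abs_pow, abs_neg, abs_one, one_pow, one_mul,
    abs_of_nonneg (fractionalPoissonCoeff_nonneg hν0.le hμ.le k j),
    fractionalPoissonCoeff_mul_gamma_div_rpow hν0.le hs0]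
end

section
/- Let ν ∈ (0,1] and μ > 0. Let (T_j)_{j≥1} be an i.i.d. sequence of nonnegative random variables, each with Laplace transform E[e^{-sT_1}] = μ / (s^ν + μ) for all s ≥ 0, and define the renewal counting process N(t) := sup{ k ∈ ℕ : T_1 + ⋯ + T_k ≤ t } (with N(t) = 0 if T_1 > t). Then for every k ∈ ℕ and every s > 0, ∫_0^∞ e^{-st} P(N(t) = k) dt = μ^k s^{ν - 1} / (s^ν + μ)^{k+1}. -/
open MeasureTheory Real ProbabilityTheory

/-- The renewal counting process associated to the inter-arrival times `T`:
`N t = sup { k : T 0 + ⋯ + T (k-1) ≤ t }` (with `N t = 0` if `T 0 > t`). -/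
noncomputable def renewalCount {Ω : Type*} (T : ℕ → Ω → ℝ) (t : ℝ) (ω : Ω) : ℕ :=
  sSup {k : ℕ | ∑ i ∈ Finset.range k, T i ω ≤ t}

/-!
Write `S m = T 0 + ⋯ + T (m-1)`. Since the partial sums are nondecreasing, `N t = k` exactly when
`S k ≤ t < S (k+1)`, as soon as the partial sums eventually exceed `t`; a Chernoff bound with
`E[e^{-S m}] = E[e^{-T 0}]^m → 0` shows that this happens almost surely. Hence
`P(N t = k) = P(S k ≤ t) - P(S (k+1) ≤ t)`, and by Fubini the Laplace transform of the
distribution function of a nonnegative `X` is `E[e^{-sX}] / s`. With `E[e^{-s S m}] = L(s)^m`,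
`L(s) = μ / (s^ν + μ)`, this gives `L(s)^k (1 - L(s)) / s`.
-/

open Set Filter Topology

lemma Nat.sSup_setOf_eq_iff {p : ℕ → Prop} (hp : ∀ ⦃a b⦄, a ≤ b → p b → p a) (h0 : p 0)
    (hfin : ∃ m, ¬ p m) (k : ℕ) : sSup {j | p j} = k ↔ p k ∧ ¬ p (k + 1) := by
  obtain ⟨m, hm⟩ := hfin
  have hbdd : BddAbove {j | p j} := ⟨m, fun j hj => not_lt.1 fun hmj => hm (hp hmj.le hj)⟩
  constructor
  · rintro rfl
    exact ⟨Nat.sSup_mem ⟨0, h0⟩ hbdd,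
      fun hsucc => (le_csSup hbdd hsucc).not_gt (Nat.lt_succ_self _)⟩
  · rintro ⟨hk, hsucc⟩
    refine le_antisymm (csSup_le ⟨0, h0⟩ fun j hj => ?_) (le_csSup hbdd hk)
    exact not_lt.1 fun hkj => hsucc (hp hkj hj)

lemma monotone_sum_range_of_nonneg {Ω : Type*} {T : ℕ → Ω → ℝ} (hT : ∀ j ω, 0 ≤ T j ω)
    (ω : Ω) :
    Monotone fun m => ∑ i ∈ Finset.range m, T i ω := fun _ _ hab =>
  Finset.sum_le_sum_of_subset_of_nonneg (Finset.range_subset_range.2 hab) fun i _ _ => hT i ω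

section Laplace

variable {Ω : Type*} [MeasurableSpace Ω] {P : Measure Ω}

lemma integrable_exp_mul_of_nonpos_of_nonneg [IsFiniteMeasure P] {X : Ω → ℝ}
    (hX : Measurable X) (hX0 : ∀ ω, 0 ≤ X ω) {u : ℝ} (hu : u ≤ 0) :
    Integrable (fun ω => exp (u * X ω)) P := by
  refine (integrable_const 1).mono' (hX.const_mul u).exp.aestronglyMeasurable
    (ae_of_all _ fun ω => ?_)
  rw [norm_of_nonneg (exp_pos _).le, exp_le_one_iff]
  exact mul_nonpos_of_nonpos_of_nonneg hu (hX0 ω)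

lemma integral_exp_neg_mul_measureReal_le [IsFiniteMeasure P] {X : Ω → ℝ}
    (hX : Measurable X) (hX0 : ∀ ω, 0 ≤ X ω) {s : ℝ} (hs : 0 < s) :
    ∫ t in Ioi 0, exp (-(s * t)) * P.real {ω | X ω ≤ t} = mgf X P (-s) / s := by
  set g : ℝ → ℝ := fun t => exp (-(s * t))
  set F : ℝ → Ω → ℝ := fun t ω => (Ici (X ω)).indicator g t
  have hg : Measurable g := by fun_prop
  have hF_int : Integrable (Function.uncurry F) ((volume.restrict (Ioi 0)).prod P) := by
    have hg_int : IntegrableOn g (Ioi 0) := by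
      simpa [g, neg_mul] using exp_neg_integrableOn_Ioi 0 hs
    refine (hg_int.comp_fst P).mono' ?_ (ae_of_all _ fun p => ?_)
    · change AEStronglyMeasurable ({p : ℝ × Ω | X p.2 ≤ p.1}.indicator (g ∘ Prod.fst)) _
      exact ((hg.comp measurable_fst).indicator
        (measurableSet_le (hX.comp measurable_snd) measurable_fst)).aestronglyMeasurable
    · exact (norm_indicator_le_norm_self _ _).trans_eq (norm_of_nonneg (exp_pos _).le)
  have h_inner_ω : ∀ t, ∫ ω, F t ω ∂P = g t * P.real {ω | X ω ≤ t} := fun t => by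
    change ∫ ω, {ω | X ω ≤ t}.indicator (fun _ => g t) ω ∂P = _
    rw [integral_indicator_const _ (measurableSet_le hX measurable_const), smul_eq_mul, mul_comm]
  have h_inner_t : ∀ ω, ∫ t in Ioi 0, F t ω = exp (-s * X ω) / s := fun ω => by
    rw [← integral_Ici_eq_integral_Ioi, setIntegral_indicator measurableSet_Ici, Ici_inter_Ici,
      max_eq_right (hX0 ω), integral_Ici_eq_integral_Ioi]
    simp only [g, ← neg_mul]
    rw [integral_exp_mul_Ioi (neg_lt_zero.2 hs)]
    ring
  calc ∫ t in Ioi 0, g t * P.real {ω | X ω ≤ t}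
      = ∫ t in Ioi 0, ∫ ω, F t ω ∂P := by simp only [h_inner_ω]
    _ = ∫ ω, (∫ t in Ioi 0, F t ω) ∂P := integral_integral_swap hF_int
    _ = mgf X P (-s) / s := by simp only [h_inner_t, integral_div, mgf]

lemma integrableOn_exp_neg_mul_measureReal_le [IsFiniteMeasure P] (X : Ω → ℝ) {s : ℝ}
    (hs : 0 < s) : IntegrableOn (fun t => exp (-(s * t)) * P.real {ω | X ω ≤ t}) (Ioi 0) := by
  have hF : Monotone fun t => P.real {ω | X ω ≤ t} := fun a b hab =>
    measureReal_mono fun ω h => le_trans h hab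
  have hexp : IntegrableOn (fun t => exp (-(s * t))) (Ioi 0) := by
    simpa [neg_mul] using exp_neg_integrableOn_Ioi 0 hs
  refine hexp.mul_bdd (c := P.real univ) hF.measurable.aestronglyMeasurable
    (ae_of_all _ fun t => ?_)
  rw [norm_of_nonneg measureReal_nonneg]
  exact measureReal_mono (subset_univ _)

section Renewal

variable {T : ℕ → Ω → ℝ}

lemma mgf_sum_range_eq_pow (hmeas : ∀ j, Measurable (T j)) (hindep : iIndepFun T P)
    (hident : ∀ j, IdentDistrib (T j) (T 0) P P) (u : ℝ) (m : ℕ) :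
    mgf (∑ i ∈ Finset.range m, T i) P u = mgf (T 0) P u ^ m := by
  rw [hindep.mgf_sum hmeas, Finset.prod_eq_pow_card fun i _ =>
    mgf_congr_of_identDistrib _ _ (hident i) u, Finset.card_range]

lemma ae_exists_lt_sum_range [IsProbabilityMeasure P] (hmeas : ∀ j, Measurable (T j))
    (hT : ∀ j ω, 0 ≤ T j ω) (hindep : iIndepFun T P)
    (hident : ∀ j, IdentDistrib (T j) (T 0) P P) (hlt : mgf (T 0) P (-1) < 1) (t : ℝ) :
    ∀ᵐ ω ∂P, ∃ m, t < ∑ i ∈ Finset.range m, T i ω := by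
  set A := {ω | ∀ m, ∑ i ∈ Finset.range m, T i ω ≤ t}
  have hbound : ∀ m : ℕ, P.real A ≤ exp t * mgf (T 0) P (-1) ^ m := fun m =>
    calc P.real A ≤ P.real {ω | (∑ i ∈ Finset.range m, T i) ω ≤ t} :=
          measureReal_mono fun ω hω => by simpa using hω m
      _ ≤ exp (-(-1) * t) * mgf (∑ i ∈ Finset.range m, T i) P (-1) := by
          refine measure_le_le_exp_mul_mgf t (by norm_num) ?_
          refine integrable_exp_mul_of_nonpos_of_nonneg (by fun_prop) (fun ω => ?_) (by norm_num)
          simpa using Finset.sum_nonneg fun i _ => hT i ω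
      _ = exp t * mgf (T 0) P (-1) ^ m := by
          rw [mgf_sum_range_eq_pow hmeas hindep hident, neg_neg, one_mul]
  have htend : Tendsto (fun m : ℕ => exp t * mgf (T 0) P (-1) ^ m) atTop (𝓝 0) := by
    simpa using (tendsto_pow_atTop_nhds_zero_of_lt_one mgf_nonneg hlt).const_mul (exp t)
  have hA : P.real A = 0 := le_antisymm (ge_of_tendsto' htend hbound) measureReal_nonneg
  rw [ae_iff]
  simpa [A, measureReal_eq_zero_iff] using hA

lemma measureReal_renewalCount_eq [IsFiniteMeasure P] (hmeas : ∀ j, Measurable (T j))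
    (hT : ∀ j ω, 0 ≤ T j ω) {t : ℝ} (ht : 0 ≤ t)
    (hfin : ∀ᵐ ω ∂P, ∃ m, t < ∑ i ∈ Finset.range m, T i ω) (k : ℕ) :
    P.real {ω | renewalCount T t ω = k} =
      P.real {ω | ∑ i ∈ Finset.range k, T i ω ≤ t} -
        P.real {ω | ∑ i ∈ Finset.range (k + 1), T i ω ≤ t} := by
  have hsub : {ω | ∑ i ∈ Finset.range (k + 1), T i ω ≤ t} ⊆
      {ω | ∑ i ∈ Finset.range k, T i ω ≤ t} := fun ω h =>
    (monotone_sum_range_of_nonneg hT ω k.le_succ).trans h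
  rw [← measureReal_sdiff hsub (measurableSet_le (by fun_prop) measurable_const)]
  refine measureReal_congr (eventuallyEq_set.2 ?_)
  filter_upwards [hfin] with ω hω
  exact Nat.sSup_setOf_eq_iff (fun a b hab h => (monotone_sum_range_of_nonneg hT ω hab).trans h)
    (by simpa using ht) (by simpa using hω) k

/-- For nonnegative `T 0`, the hypothesis `mgf (T 0) P (-1) < 1` just says that `T 0` is not
almost surely `0`. -/
theorem integral_exp_neg_mul_measureReal_renewalCount_eq [IsProbabilityMeasure P]
    (hmeas : ∀ j, Measurable (T j)) (hT : ∀ j ω, 0 ≤ T j ω) (hindep : iIndepFun T P)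
    (hident : ∀ j, IdentDistrib (T j) (T 0) P P) (hlt : mgf (T 0) P (-1) < 1) (k : ℕ)
    {s : ℝ} (hs : 0 < s) :
    ∫ t in Ioi 0, exp (-(s * t)) * P.real {ω | renewalCount T t ω = k} =
      mgf (T 0) P (-s) ^ k * (1 - mgf (T 0) P (-s)) / s := by
  have hS : ∀ m, ∫ t in Ioi 0, exp (-(s * t)) * P.real {ω | ∑ i ∈ Finset.range m, T i ω ≤ t} =
      mgf (T 0) P (-s) ^ m / s := fun m => by
    rw [← mgf_sum_range_eq_pow hmeas hindep hident]
    simpa using integral_exp_neg_mul_measureReal_le (P := P)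
      (X := ∑ i ∈ Finset.range m, T i) (by fun_prop)
      (fun ω => by simpa using Finset.sum_nonneg fun i _ => hT i ω) hs
  calc ∫ t in Ioi 0, exp (-(s * t)) * P.real {ω | renewalCount T t ω = k}
      = ∫ t in Ioi 0, (exp (-(s * t)) * P.real {ω | ∑ i ∈ Finset.range k, T i ω ≤ t} -
          exp (-(s * t)) * P.real {ω | ∑ i ∈ Finset.range (k + 1), T i ω ≤ t}) := by
        refine setIntegral_congr_fun measurableSet_Ioi fun t ht => ?_
        rw [measureReal_renewalCount_eq hmeas hT (le_of_lt ht)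
          (ae_exists_lt_sum_range hmeas hT hindep hident hlt t), mul_sub]
    _ = mgf (T 0) P (-s) ^ k * (1 - mgf (T 0) P (-s)) / s := by
        rw [integral_sub (integrableOn_exp_neg_mul_measureReal_le _ hs)
          (integrableOn_exp_neg_mul_measureReal_le _ hs), hS, hS]
        ring

end Renewal

end Laplace

theorem fractional_poisson_laplace_state_prob_general
    {Ω : Type*} [MeasurableSpace Ω] (P : Measure Ω) [IsProbabilityMeasure P]
    (ν : ℝ) (μ : ℝ) (hμ : 0 < μ)
    (T : ℕ → Ω → ℝ) (hTmeas : ∀ j, Measurable (T j))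
    (hTnonneg : ∀ j ω, 0 ≤ T j ω)
    (hTiid : iIndepFun T P)
    (hTident : ∀ j, Measure.map (T j) P = Measure.map (T 0) P)
    (hTLaplace : ∀ s : ℝ, 0 ≤ s →
      ∫ ω, Real.exp (-(s * T 0 ω)) ∂P = μ / (s ^ ν + μ)) :
    ∀ (k : ℕ) (s : ℝ), 0 < s →
      ∫ t in Set.Ioi (0 : ℝ),
          Real.exp (-(s * t)) * (P {ω | renewalCount T t ω = k}).toReal
        = μ ^ k * s ^ (ν - 1) / (s ^ ν + μ) ^ (k + 1) := by
  intro k s hs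
  have hident : ∀ j, IdentDistrib (T j) (T 0) P P := fun j =>
    ⟨(hTmeas j).aemeasurable, (hTmeas 0).aemeasurable, hTident j⟩
  have hmgf : ∀ u, 0 ≤ u → mgf (T 0) P (-u) = μ / (u ^ ν + μ) := fun u hu => by
    simpa [mgf, neg_mul] using hTLaplace u hu
  have hlt : mgf (T 0) P (-1) < 1 := by
    rw [hmgf 1 zero_le_one, one_rpow, div_lt_one (by positivity)]
    linarith
  simp only [← measureReal_def]
  rw [integral_exp_neg_mul_measureReal_renewalCount_eq hTmeas hTnonneg hTiid hident hlt k hs,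
    hmgf s hs.le, rpow_sub_one hs.ne', div_pow]
  field_simp
  ring

/-- Laplace transform of the state probabilities of the fractional Poisson
process, constructed as a renewal process with i.i.d. positive-Linnik
(Mittag--Leffler distributed) inter-arrival times: for every `k ∈ ℕ` and `s > 0`,
`∫_0^∞ e^{-st} P(N t = k) dt = μ^k s^{ν-1} / (s^ν + μ)^{k+1}`. -/
theorem fractional_poisson_laplace_state_prob
    {Ω : Type*} [MeasurableSpace Ω] (P : Measure Ω) [IsProbabilityMeasure P]
    (ν : ℝ) (hν : ν ∈ Set.Ioc (0 : ℝ) 1) (μ : ℝ) (hμ : 0 < μ)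
    (T : ℕ → Ω → ℝ) (hTmeas : ∀ j, Measurable (T j))
    (hTnonneg : ∀ j ω, 0 ≤ T j ω)
    (hTiid : iIndepFun T P)
    (hTident : ∀ j, Measure.map (T j) P = Measure.map (T 0) P)
    (hTLaplace : ∀ s : ℝ, 0 ≤ s →
      ∫ ω, Real.exp (-(s * T 0 ω)) ∂P = μ / (s ^ ν + μ)) :
    ∀ (k : ℕ) (s : ℝ), 0 < s →
      ∫ t in Set.Ioi (0 : ℝ),
          Real.exp (-(s * t)) * (P {ω | renewalCount T t ω = k}).toReal
        = μ ^ k * s ^ (ν - 1) / (s ^ ν + μ) ^ (k + 1) :=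
  fractional_poisson_laplace_state_prob_general P ν μ hμ T hTmeas hTnonneg hTiid hTident hTLaplace
end

section
/- Let ν ∈ (0,1], μ > 0 and t > 0, and set x := μ t^ν. Then the state probabilities of the fractional Poisson process sum to one: ∑_{k=0}^∞ x^k E^{k+1}_{ν, νk+1}(-x) = 1, where E^γ_{α,β}(z) = ∑_{j=0}^∞ Γ(γ + j) z^j / (Γ(γ) · j! · Γ(αj + β)). -/
/-!
Expanding the series, `x^k E^{k+1}_{ν,νk+1}(-x) = ∑_j C(k+j, j) (-1)^j x^(k+j) / Γ(ν(k+j)+1)`.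
Regrouping the double series along the diagonals `k + j = n` leaves
`∑_n (1 - 1)^n x^n / Γ(νn+1) = 1`. The regrouping is legitimate because the double series
converges absolutely: its diagonal sums of absolute values are `(2|x|)^n / Γ(νn+1)`, summable
by the ratio test, since log-convexity of `Γ` gives `Γ(s) / Γ(s+ν) ≤ (s+ν)^(1-ν) / s → 0`.
-/

open Real

open Filter Topology Finset

namespace Real

theorem mul_Gamma_le_Gamma_add_mul_rpow {s ν : ℝ} (hs : 0 < s) (hν0 : 0 ≤ ν)
    (hν1 : ν ≤ 1) :
    s * Gamma s ≤ Gamma (s + ν) * (s + ν) ^ (1 - ν) := by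
  have hsν : 0 < s + ν := by linarith
  -- log-convexity of `Γ` between `s + ν` and `s + ν + 1`; their `(ν, 1 - ν)`-mean is `s + 1`
  have hconv := convexOn_log_Gamma.2 (Set.mem_Ioi.2 hsν)
    (Set.mem_Ioi.2 (by linarith : 0 < s + ν + 1)) hν0 (sub_nonneg.2 hν1) (add_sub_cancel ν 1)
  simp only [smul_eq_mul, Function.comp_apply] at hconv
  rw [show ν * (s + ν) + (1 - ν) * (s + ν + 1) = s + 1 by ring, Gamma_add_one hs.ne',
    Gamma_add_one hsν.ne', log_mul hsν.ne' (Gamma_pos_of_pos hsν).ne'] at hconv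
  rw [← log_le_log_iff (by positivity) (by positivity), log_mul (Gamma_pos_of_pos hsν).ne'
    (rpow_pos_of_pos hsν _).ne', log_rpow hsν]
  linarith

theorem tendsto_Gamma_div_Gamma_add_atTop {ν : ℝ} (hν0 : 0 < ν) (hν1 : ν ≤ 1) :
    Tendsto (fun s => Gamma s / Gamma (s + ν)) atTop (𝓝 0) := by
  have hbound :
      ∀ᶠ s in atTop, Gamma s / Gamma (s + ν) ≤ (s + ν) ^ (-ν) * (1 + ν / s) := by
    filter_upwards [eventually_gt_atTop 0] with s hs
    have hsν : 0 < s + ν := by linarith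
    rw [div_le_iff₀ (Gamma_pos_of_pos hsν), ← mul_le_mul_iff_right₀ hs]
    calc s * Gamma s ≤ Gamma (s + ν) * (s + ν) ^ (1 - ν) :=
          mul_Gamma_le_Gamma_add_mul_rpow hs hν0.le hν1
      _ = s * ((s + ν) ^ (-ν) * (1 + ν / s) * Gamma (s + ν)) := by
          rw [sub_eq_add_neg, rpow_add hsν, rpow_one]
          field_simp
  have hlim : Tendsto (fun s => (s + ν) ^ (-ν) * (1 + ν / s)) atTop (𝓝 0) := by
    simpa using
      ((tendsto_rpow_neg_atTop hν0).comp (tendsto_atTop_add_const_right _ ν tendsto_id)).mul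
        (tendsto_const_nhds.add (tendsto_const_nhds.div_atTop tendsto_id))
  refine squeeze_zero' ?_ hbound hlim
  filter_upwards [eventually_ge_atTop 0] with s hs
  exact div_nonneg (Gamma_nonneg_of_nonneg hs) (Gamma_nonneg_of_nonneg (by linarith))

theorem summable_pow_div_Gamma_mul_add_one {ν : ℝ} (hν0 : 0 < ν) (hν1 : ν ≤ 1) (y : ℝ) :
    Summable fun n : ℕ => y ^ n / Gamma (ν * n + 1) := by
  refine summable_of_ratio_norm_eventually_le one_half_lt_one ?_
  have hs : Tendsto (fun n : ℕ => ν * n + 1) atTop atTop :=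
    tendsto_atTop_add_const_right _ 1 (tendsto_natCast_atTop_atTop.const_mul_atTop hν0)
  have hratio := ((tendsto_Gamma_div_Gamma_add_atTop hν0 hν1).comp hs).const_mul |y|
  rw [mul_zero] at hratio
  filter_upwards [hratio.eventually (eventually_le_nhds one_half_pos)] with n hn
  have hΓ : 0 < Gamma (ν * n + 1) := Gamma_pos_of_pos (by positivity)
  have hΓν : 0 < Gamma (ν * n + 1 + ν) := Gamma_pos_of_pos (by positivity)
  calc ‖y ^ (n + 1) / Gamma (ν * ↑(n + 1) + 1)‖
      = |y| * (Gamma (ν * n + 1) / Gamma (ν * n + 1 + ν)) *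
          ‖y ^ n / Gamma (ν * n + 1)‖ := by
        rw [show ν * ↑(n + 1) + 1 = ν * n + 1 + ν by push_cast; ring]
        simp only [norm_div, norm_pow, norm_eq_abs, abs_of_pos hΓ, abs_of_pos hΓν]
        field_simp
        ring
    _ ≤ 1 / 2 * ‖y ^ n / Gamma (ν * n + 1)‖ := by gcongr; exact hn

end Real

theorem Finset.sum_antidiagonal_choose_mul_pow {R : Type*} [CommSemiring R] (y : R) (n : ℕ) :
    ∑ p ∈ antidiagonal n, ((p.1 + p.2).choose p.2 : R) * y ^ p.2 = (1 + y) ^ n := by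
  rw [(Commute.one_left y).add_pow']
  refine sum_congr rfl fun p hp => ?_
  rw [← HasAntidiagonal.mem_antidiagonal.1 hp, Nat.choose_symm_add, nsmul_eq_mul, one_pow,
    one_mul]

theorem summable_of_nonneg_of_summable_sum_antidiagonal {f : ℕ × ℕ → ℝ} (hf : 0 ≤ f)
    (h : Summable fun n => ∑ p ∈ antidiagonal n, f p) : Summable f := by
  refine HasAntidiagonal.sigmaAntidiagonalEquivProd.summable_iff.1
    ((summable_sigma_of_nonneg fun _ => hf _).2 ⟨fun _ => Summable.of_finite, ?_⟩)
  exact h.congr fun n => (Finset.tsum_subtype (antidiagonal n) f).symm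

theorem Summable.tsum_eq_tsum_sum_antidiagonal {M : Type*} [AddCommMonoid M] [TopologicalSpace M]
    [ContinuousAdd M] [T3Space M] {f : ℕ × ℕ → M} (hf : Summable f) :
    ∑' p, f p = ∑' n, ∑ p ∈ antidiagonal n, f p := by
  rw [← HasAntidiagonal.sigmaAntidiagonalEquivProd.tsum_eq]
  exact (Summable.tsum_sigma' (fun _ => Summable.of_finite)
    (HasAntidiagonal.sigmaAntidiagonalEquivProd.summable_iff.2 hf)).trans
      (tsum_congr fun n => Finset.tsum_subtype (antidiagonal n) f)

theorem tsum_tsum_choose_mul_neg_one_pow_mul {a : ℕ → ℝ}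
    (ha : Summable fun n => 2 ^ n * a n) :
    ∑' k, ∑' j, ((k + j).choose j : ℝ) * (-1) ^ j * a (k + j) = a 0 := by
  set c : ℕ × ℕ → ℝ := fun p => ((p.1 + p.2).choose p.2 : ℝ) * (-1) ^ p.2 * a (p.1 + p.2)
  have hsum : ∀ (b : ℕ → ℝ) y n,
      ∑ p ∈ antidiagonal n, ((p.1 + p.2).choose p.2 : ℝ) * y ^ p.2 * b (p.1 + p.2)
        = (1 + y) ^ n * b n := by
    intro b y n
    rw [← sum_antidiagonal_choose_mul_pow, sum_mul]
    exact sum_congr rfl fun p hp => by rw [HasAntidiagonal.mem_antidiagonal.1 hp]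
  have hc : Summable c := by
    refine Summable.of_norm
      (summable_of_nonneg_of_summable_sum_antidiagonal (fun _ => norm_nonneg _) ?_)
    convert (summable_norm_iff.2 ha) using 2 with n
    simpa [c, Real.norm_eq_abs, one_add_one_eq_two, abs_mul] using hsum (fun n => |a n|) 1 n
  calc ∑' k, ∑' j, c (k, j) = ∑' p, c p := hc.tsum_prod.symm
    _ = ∑' n, (1 + -1) ^ n * a n := by
      rw [hc.tsum_eq_tsum_sum_antidiagonal]
      simp only [c, hsum a]
    _ = a 0 := by
      rw [tsum_eq_single 0 fun n hn => by simp [hn]]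
      simp

theorem pow_mul_mittagLeffler3_neg (ν x : ℝ) (k : ℕ) :
    x ^ k * mittagLeffler3 ν (ν * k + 1) (k + 1) (-x)
      = ∑' j : ℕ,
          ((k + j).choose j : ℝ) * (-1) ^ j * (x ^ (k + j) / Gamma (ν * ↑(k + j) + 1)) := by
  rw [mittagLeffler3, ← tsum_mul_left]
  refine tsum_congr fun j => ?_
  rw [show (k : ℝ) + 1 + j = ↑(k + j) + 1 by push_cast; ring,
    show ν * j + (ν * k + 1) = ν * ↑(k + j) + 1 by push_cast; ring,
    Gamma_nat_eq_factorial, Gamma_nat_eq_factorial, ← Nat.choose_symm_add, Nat.cast_add_choose,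
    neg_eq_neg_one_mul, mul_pow, pow_add]
  field_simp

theorem fractional_poisson_state_prob_sum_one_general
    (ν : ℝ) (hν : ν ∈ Set.Ioc (0 : ℝ) 1) (x : ℝ) :
    ∑' k : ℕ, x ^ k * mittagLeffler3 ν (ν * k + 1) (k + 1) (-x) = 1 := by
  have hsummable : Summable fun n : ℕ => 2 ^ n * (x ^ n / Gamma (ν * n + 1)) := by
    simpa only [mul_pow, mul_div_assoc] using summable_pow_div_Gamma_mul_add_one hν.1 hν.2 (2 * x)
  simp_rw [pow_mul_mittagLeffler3_neg]
  rw [tsum_tsum_choose_mul_neg_one_pow_mul hsummable]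
  simp

/-- The state probabilities of the fractional Poisson process sum to one:
for `ν ∈ (0,1]`, `μ > 0`, `t > 0` and `x = μ t^ν`,
`∑_{k} x^k E^{k+1}_{ν,νk+1}(-x) = 1`. -/
theorem fractional_poisson_state_prob_sum_one
    (ν : ℝ) (hν : ν ∈ Set.Ioc (0 : ℝ) 1) (μ : ℝ) (hμ : 0 < μ)
    (t : ℝ) (ht : 0 < t) (x : ℝ) (hx : x = μ * t ^ ν) :
    ∑' k : ℕ, x ^ k * mittagLeffler3 ν (ν * k + 1) (k + 1) (-x) = 1 :=
  fractional_poisson_state_prob_sum_one_general ν hν x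
end
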